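/- Let M and K be real symmetric positive definite n×n matrices, y_d, y_r ∈ ℝⁿ, a ≤ 0 ≤ b, and α, β > 0. For u ∈ ℝⁿ define y(u) = K⁻¹M(u + y_r) and the reduced objective Ĵ(u) = ½‖y(u) − y_d‖²_M + (α/2)‖u‖²_M + β‖Mu‖₁. Then u* ∈ [a,b]ⁿ minimizes Ĵ over [a,b]ⁿ if and only if, setting y* = K⁻¹M(u* + y_r) and p* = K⁻¹M(y_d − y*), the variational inequality (α u* − p*)ᵀ M (u − u*) + β(‖Mu‖₁ − ‖Mu*‖₁) ≥ 0 holds for all u ∈ [a,b]ⁿ. (This is the matrix form of the discretized first-order optimality condition for the approximate discretization using the mass-matrix ℓ¹-term.) -/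

import Mathlib

open Matrix
open scoped BigOperators

/-- The reduced objective `Ĵ(u) = ½‖K⁻¹M(u + y_r) − y_d‖²_M + (α/2)‖u‖²_M + β‖Mu‖₁`
of the approximately discretized sparse optimal control problem. -/
noncomputable def reducedObj {n : ℕ} (M K : Matrix (Fin n) (Fin n) ℝ)
    (y_d y_r : Fin n → ℝ) (α β : ℝ) (u : Fin n → ℝ) : ℝ :=
  (1 / 2) * ((K⁻¹.mulVec (M.mulVec (u + y_r)) - y_d) ⬝ᵥ
      M.mulVec (K⁻¹.mulVec (M.mulVec (u + y_r)) - y_d))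
    + (α / 2) * (u ⬝ᵥ M.mulVec u) + β * ∑ i, |M.mulVec u i|

/-- Symmetric bilinear form. -/
lemma aux_symm_dot {n : ℕ} {M : Matrix (Fin n) (Fin n) ℝ} (hM : M.IsSymm)
    (v w : Fin n → ℝ) : v ⬝ᵥ M.mulVec w = w ⬝ᵥ M.mulVec v := by
  conv_lhs => rw [dotProduct_mulVec, ← hM, vecMul_transpose]
  exact dotProduct_comm _ _

lemma aux_prod_symm {n : ℕ} {M K : Matrix (Fin n) (Fin n) ℝ}
    (hMsymm : M.IsSymm) (hKsymm : K.IsSymm) : (M * K⁻¹ * M).IsSymm := by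
  unfold Matrix.IsSymm
  rw [transpose_mul, transpose_mul, transpose_nonsing_inv, hKsymm, hMsymm, ← Matrix.mul_assoc]

/-- Self-adjointness of `K⁻¹M` w.r.t. the `M`-inner product. -/
lemma aux_selfadj {n : ℕ} {M K : Matrix (Fin n) (Fin n) ℝ}
    (hMsymm : M.IsSymm) (hKsymm : K.IsSymm) (v w : Fin n → ℝ) :
    (K⁻¹.mulVec (M.mulVec v)) ⬝ᵥ M.mulVec w
      = v ⬝ᵥ M.mulVec (K⁻¹.mulVec (M.mulVec w)) := by
  have h1 : (K⁻¹.mulVec (M.mulVec v)) ⬝ᵥ M.mulVec w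
      = w ⬝ᵥ (M * K⁻¹ * M).mulVec v := by
    rw [aux_symm_dot hMsymm, mulVec_mulVec, mulVec_mulVec]
  have h2 : v ⬝ᵥ M.mulVec (K⁻¹.mulVec (M.mulVec w))
      = v ⬝ᵥ (M * K⁻¹ * M).mulVec w := by
    rw [mulVec_mulVec, mulVec_mulVec]
  rw [h1, h2, aux_symm_dot (aux_prod_symm hMsymm hKsymm)]

lemma aux_posdef_nonneg {n : ℕ} {M : Matrix (Fin n) (Fin n) ℝ} (hM : M.PosDef)
    (x : Fin n → ℝ) : 0 ≤ x ⬝ᵥ M.mulVec x := by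
  have := hM.posSemidef.re_dotProduct_nonneg x
  simpa using this

/-- A small scalar limiting lemma. -/
lemma aux_limit {L c : ℝ} (hc : 0 ≤ c)
    (h : ∀ t : ℝ, 0 < t → t ≤ 1 → 0 ≤ L + t * c) : 0 ≤ L := by
  by_contra hL
  push_neg at hL
  set t := min 1 (-L / (c + 1)) with ht
  have hc1 : (0:ℝ) < c + 1 := by linarith
  have ht0 : 0 < t := lt_min one_pos (div_pos (by linarith) (by linarith))
  have ht1 : t ≤ 1 := min_le_left _ _
  have ht2 : t ≤ -L / (c + 1) := min_le_right _ _
  have h3 : t * (c + 1) ≤ -L := by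
    rw [← le_div_iff₀ hc1]; exact ht2
  have := h t ht0 ht1
  nlinarith

/-- Matrix form of the discretized first-order optimality condition: `u* ∈ [a,b]ⁿ`
minimizes the reduced objective `Ĵ` over the box `[a,b]ⁿ` if and only if, with
`y* = K⁻¹M(u* + y_r)` and `p* = K⁻¹M(y_d − y*)`, the variational inequality
`(αu* − p*)ᵀM(u − u*) + β(‖Mu‖₁ − ‖Mu*‖₁) ≥ 0` holds for all `u ∈ [a,b]ⁿ`. -/
theorem stmt_19 {n : ℕ} (M K : Matrix (Fin n) (Fin n) ℝ)
    (hMsymm : M.IsSymm) (hKsymm : K.IsSymm) (hM : M.PosDef) (hK : K.PosDef)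
    (y_d y_r : Fin n → ℝ) (a b α β : ℝ) (ha : a ≤ 0) (hb : 0 ≤ b)
    (hα : 0 < α) (hβ : 0 < β)
    (ustar : Fin n → ℝ) (hbox : ∀ i, a ≤ ustar i ∧ ustar i ≤ b) :
    (∀ u : Fin n → ℝ, (∀ i, a ≤ u i ∧ u i ≤ b) →
        reducedObj M K y_d y_r α β ustar ≤ reducedObj M K y_d y_r α β u) ↔
      (∀ u : Fin n → ℝ, (∀ i, a ≤ u i ∧ u i ≤ b) →
        (α • ustar - K⁻¹.mulVec (M.mulVec (y_d - K⁻¹.mulVec (M.mulVec (ustar + y_r))))) ⬝ᵥ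
            M.mulVec (u - ustar)
          + β * ((∑ i, |M.mulVec u i|) - ∑ i, |M.mulVec ustar i|) ≥ 0) := by
  set yst : Fin n → ℝ := K⁻¹.mulVec (M.mulVec (ustar + y_r)) with hyst
  set pstar : Fin n → ℝ := K⁻¹.mulVec (M.mulVec (y_d - yst)) with hpstar
  set g : Fin n → ℝ := α • ustar - pstar with hg
  set ℓ1 : (Fin n → ℝ) → ℝ := fun w => ∑ i, |M.mulVec w i| with hℓ1
  set Q : (Fin n → ℝ) → ℝ := fun h =>
    (K⁻¹.mulVec (M.mulVec h)) ⬝ᵥ M.mulVec (K⁻¹.mulVec (M.mulVec h))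
      + α * (h ⬝ᵥ M.mulVec h) with hQ
  have hQnonneg : ∀ h, 0 ≤ Q h := by
    intro h
    have h1 := aux_posdef_nonneg hM (K⁻¹.mulVec (M.mulVec h))
    have h2 := aux_posdef_nonneg hM h
    have : 0 ≤ α * (h ⬝ᵥ M.mulVec h) := mul_nonneg hα.le h2
    simp only [hQ]
    linarith
  -- key expansion identity
  have key : ∀ w : Fin n → ℝ,
      reducedObj M K y_d y_r α β w
        = reducedObj M K y_d y_r α β ustar
          + g ⬝ᵥ M.mulVec (w - ustar) + (1 / 2) * Q (w - ustar)
          + β * (ℓ1 w - ℓ1 ustar) := by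
    intro w
    set h : Fin n → ℝ := w - ustar with hh
    set Sh : Fin n → ℝ := K⁻¹.mulVec (M.mulVec h) with hSh
    set e : Fin n → ℝ := yst - y_d with he
    have hw : w + y_r = (ustar + y_r) + h := by rw [hh]; abel
    have hy : K⁻¹.mulVec (M.mulVec (w + y_r)) = yst + Sh := by
      rw [hw, mulVec_add, mulVec_add, hyst, hSh]
    have heq : yst + Sh - y_d = e + Sh := by rw [he]; abel
    have cross : e ⬝ᵥ M.mulVec Sh = -(pstar ⬝ᵥ M.mulVec h) := by
      have h1 : pstar ⬝ᵥ M.mulVec h = (y_d - yst) ⬝ᵥ M.mulVec Sh := by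
        rw [hpstar, hSh]; exact aux_selfadj hMsymm hKsymm _ _
      have h2 : y_d - yst = -e := by rw [he]; abel
      rw [h1, h2, neg_dotProduct, neg_neg]
    have expand1 : (yst + Sh - y_d) ⬝ᵥ M.mulVec (yst + Sh - y_d)
        = e ⬝ᵥ M.mulVec e + 2 * (e ⬝ᵥ M.mulVec Sh) + Sh ⬝ᵥ M.mulVec Sh := by
      rw [heq, mulVec_add, add_dotProduct, dotProduct_add, dotProduct_add,
        aux_symm_dot hMsymm Sh e]
      ring
    have hwu : w = ustar + h := by rw [hh]; abel
    have expand2 : w ⬝ᵥ M.mulVec w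
        = ustar ⬝ᵥ M.mulVec ustar + 2 * (ustar ⬝ᵥ M.mulVec h) + h ⬝ᵥ M.mulVec h := by
      conv_lhs => rw [hwu]
      rw [mulVec_add, add_dotProduct, dotProduct_add, dotProduct_add,
        aux_symm_dot hMsymm h ustar]
      ring
    have hgdot : g ⬝ᵥ M.mulVec h
        = α * (ustar ⬝ᵥ M.mulVec h) - pstar ⬝ᵥ M.mulVec h := by
      rw [hg, sub_dotProduct, smul_dotProduct, smul_eq_mul]
    simp only [reducedObj, hy, ← hyst, heq]
    rw [show e + Sh = yst + Sh - y_d from heq.symm, expand1, expand2]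
    simp only [hQ, hℓ1, ← hSh, ← he]
    rw [hgdot, cross]
    ring
  constructor
  · -- minimality implies VI
    intro hopt u hu
    set h : Fin n → ℝ := u - ustar with hh
    set L : ℝ := g ⬝ᵥ M.mulVec h + β * (ℓ1 u - ℓ1 ustar) with hL
    have main : ∀ t : ℝ, 0 < t → t ≤ 1 → 0 ≤ L + t * (Q h / 2) := by
      intro t ht0 ht1
      set ut : Fin n → ℝ := ustar + t • h with hut
      have hutc : ut = (1 - t) • ustar + t • u := by
        funext i
        simp only [hut, hh, Pi.add_apply, Pi.smul_apply, Pi.sub_apply, smul_eq_mul]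
        ring
      have hutbox : ∀ i, a ≤ ut i ∧ ut i ≤ b := by
        intro i
        have h1 := (hbox i).1
        have h2 := (hbox i).2
        have h3 := (hu i).1
        have h4 := (hu i).2
        have : ut i = (1 - t) * ustar i + t * u i := by
          rw [hutc]; simp [smul_eq_mul]
        constructor <;> rw [this] <;> nlinarith
      have hJ := hopt ut hutbox
      have hkey := key ut
      have hdiff : ut - ustar = t • h := by rw [hut]; abel
      have hgsc : g ⬝ᵥ M.mulVec (t • h) = t * (g ⬝ᵥ M.mulVec h) := by
        rw [mulVec_smul, dotProduct_smul, smul_eq_mul]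
      have hQsc : Q (t • h) = t ^ 2 * Q h := by
        simp only [hQ, mulVec_smul, smul_dotProduct, dotProduct_smul, smul_eq_mul]
        ring
      have hl1 : ℓ1 ut ≤ (1 - t) * ℓ1 ustar + t * ℓ1 u := by
        simp only [hℓ1]
        rw [Finset.mul_sum, Finset.mul_sum, ← Finset.sum_add_distrib]
        apply Finset.sum_le_sum
        intro i _
        have : M.mulVec ut i = (1 - t) * M.mulVec ustar i + t * M.mulVec u i := by
          rw [hutc, mulVec_add, mulVec_smul, mulVec_smul]
          simp [smul_eq_mul]
        rw [this]
        calc |(1 - t) * M.mulVec ustar i + t * M.mulVec u i|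
            ≤ |(1 - t) * M.mulVec ustar i| + |t * M.mulVec u i| := abs_add_le _ _
          _ = (1 - t) * |M.mulVec ustar i| + t * |M.mulVec u i| := by
              rw [abs_mul, abs_mul, abs_of_nonneg (by linarith : (0:ℝ) ≤ 1 - t),
                abs_of_nonneg ht0.le]
      have hineq : 0 ≤ t * (g ⬝ᵥ M.mulVec h) + (1 / 2) * (t ^ 2 * Q h)
          + β * (ℓ1 ut - ℓ1 ustar) := by
        rw [hkey, hdiff, hgsc, hQsc] at hJ
        linarith
      have hl1' : β * (ℓ1 ut - ℓ1 ustar) ≤ β * (t * (ℓ1 u - ℓ1 ustar)) := by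
        apply mul_le_mul_of_nonneg_left _ hβ.le
        nlinarith [hl1]
      have h0 : 0 ≤ t * (g ⬝ᵥ M.mulVec h) + (1 / 2) * (t ^ 2 * Q h)
          + β * (t * (ℓ1 u - ℓ1 ustar)) := by linarith
      have := (mul_le_mul_iff_right₀ ht0).mpr (le_refl (1:ℝ))
      have hdiv : 0 ≤ t * (L + t * (Q h / 2)) := by
        rw [hL]; nlinarith [h0]
      nlinarith [hdiv, ht0]
    have := aux_limit (div_nonneg (hQnonneg h) (by norm_num)) main
    rw [hL] at this
    simp only [hℓ1] at this
    linarith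
  · -- VI implies minimality
    intro hVI u hu
    have hkey := key u
    have hvi := hVI u hu
    have hq := hQnonneg (u - ustar)
    simp only [hℓ1] at hkey
    rw [hkey]
    set J0 := reducedObj M K y_d y_r α β ustar
    set X := g ⬝ᵥ M *ᵥ (u - ustar)
    set Y := Q (u - ustar)
    set Z := β * (∑ i : Fin n, |(M *ᵥ u) i| - ∑ i : Fin n, |(M *ᵥ ustar) i|)
    clear_value J0 X Y Z
    linarith [hvi, hq]
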